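/- arXiv:1905.08174 — 2 statements merged into one kernel-verified Lean document; each statement's English description precedes it below -/
import Mathlib

section
/- Let X be a topological space, Z ⊆ X an irreducible subset, and E ⊆ X a finite union of locally closed subsets. Then the intersection E ∩ Z contains a subset which is open in Z and dense in Z if and only if E ∩ Z is dense in Z. -/
/-!
The closure of `E ∩ Z = ⋃ s, s ∩ Z` is the finite union of the closed sets `closure (s ∩ Z)`,
so an irreducible `Z` covered by it is already contained in one of them, say with
`s = O ∩ C` for `O` open and `C` closed. Then `Z ⊆ C`, hence `O ∩ Z ⊆ s ∩ Z`, and `O ∩ Z`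
is dense in `Z` because it contains `s ∩ Z`.
-/

section

open Set

variable {X : Type*} [TopologicalSpace X]

theorem IsIrreducible.exists_subset_closure_of_subset_closure_biUnion {ι : Type*} {Z : Set X}
    (hZ : IsIrreducible Z) (S : Finset ι) (t : ι → Set X)
    (h : Z ⊆ closure (⋃ i ∈ S, t i)) : ∃ i ∈ S, Z ⊆ closure (t i) := by
  classical
  rw [S.closure_biUnion] at h
  obtain ⟨_, hmem, hZc⟩ := isIrreducible_iff_sUnion_isClosed.mp hZ (S.image (closure ∘ t))
    (by simp [isClosed_closure]) (by simpa [sUnion_image] using h)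
  obtain ⟨i, hi, rfl⟩ := Finset.mem_image.mp hmem
  exact ⟨i, hi, hZc⟩

theorem IsLocallyClosed.exists_isOpen_inter_subset_of_subset_closure {s Z : Set X}
    (hs : IsLocallyClosed s) (h : Z ⊆ closure (s ∩ Z)) :
    ∃ O, IsOpen O ∧ O ∩ Z ⊆ s ∧ Z ⊆ closure (O ∩ Z) := by
  obtain ⟨O, C, hO, hC, rfl⟩ := hs
  have hZC : Z ⊆ C :=
    h.trans (hC.closure_subset_iff.mpr fun _ hx ↦ hx.1.2)
  refine ⟨O, hO, fun x hx ↦ ⟨hx.1, hZC hx.2⟩, h.trans (closure_mono ?_)⟩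
  exact fun x hx ↦ ⟨hx.1.1, hx.2⟩

end

/-- For `Z ⊆ X` irreducible and `E` a finite union of locally closed
subsets, `E ∩ Z` contains an open dense subset of `Z` iff `E ∩ Z` is dense in `Z`. -/
theorem constructible_inter_irreducible_dense_iff {X : Type*} [TopologicalSpace X]
    (Z E : Set X) (hZ : IsIrreducible Z)
    (hE : ∃ S : Finset (Set X), (∀ s ∈ S, IsLocallyClosed s) ∧ E = ⋃ s ∈ S, s) :
    (∃ U : Set X, U ⊆ E ∩ Z ∧ (∃ O : Set X, IsOpen O ∧ U = O ∩ Z) ∧ Z ⊆ closure U) ↔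
      Z ⊆ closure (E ∩ Z) := by
  refine ⟨fun ⟨U, hUE, _, hZU⟩ ↦ hZU.trans (closure_mono hUE), fun hZE ↦ ?_⟩
  obtain ⟨S, hS, rfl⟩ := hE
  rw [Set.iUnion₂_inter] at hZE
  obtain ⟨s, hsS, hZs⟩ := hZ.exists_subset_closure_of_subset_closure_biUnion S _ hZE
  obtain ⟨O, hO, hOs, hZO⟩ := (hS s hsS).exists_isOpen_inter_subset_of_subset_closure hZs
  exact ⟨O ∩ Z, fun x hx ↦ ⟨Set.mem_biUnion hsS (hOs hx), hx.2⟩, ⟨O, hO, rfl⟩, hZO⟩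
end

section
/- Let λ = (λ_1 ≥ ... ≥ λ_m ≥ 0) and μ = (μ_1 ≥ ... ≥ μ_m ≥ 0) be partitions with the same total size, and for 1 ≤ i ≤ m let ρ^{(i)} = (i, i-1, ..., 1) ∈ ℤ^i. Suppose τ is a semi-standard Young tableau of shape λ and weight μ in the alphabet {1,...,m}, and for each i let λ^{(i)} and μ^{(i)} denote the shape and weight of the tableau obtained from τ by deleting all entries greater than i. Let r_{m,k} denote the row of the k-th occurrence of the entry m in τ (for 1 ≤ k ≤ μ_m). Then ⟨λ - μ, ρ^{(m)}⟩ - ⟨λ^{(m-1)} - μ^{(m-1)}, ρ^{(m-1)}⟩ = Σ_{k=1}^{μ_m} (m - r_{m,k}), where ⟨·,·⟩ is the dot product (padding vectors with zeros as needed). -/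
/-!
Since column entries strictly increase and are at least `1`, the cell in row `r` (counted from
`0`) of a tableau has entry `t ≥ r + 1`. Expanding `⟨λ^{(k)} - μ^{(k)}, ρ^{(k)}⟩` cell by cell,
a cell with entry `t ≤ k` in row `r` contributes `(k - r)` through `λ^{(k)}` and `-(k - t + 1)`
through `μ^{(k)}`, i.e. `t - (r + 1)` in total. Passing from `k = m - 1` to `k = m` only adds
the cells with entry `m`.
-/

open Finset

theorem Finset.sum_mul_card_filter_eq_sum_comp {ι κ R : Type*} [DecidableEq κ]
    [NonAssocSemiring R] {s : Finset ι} {t : Finset κ} {g : ι → κ} (h : ∀ i ∈ s, g i ∈ t)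
    (w : κ → R) :
    ∑ j ∈ t, w j * (#{i ∈ s | g i = j} : R) = ∑ i ∈ s, w (g i) := by
  rw [← sum_fiberwise_of_maps_to' h]
  simp only [sum_const, nsmul_eq_mul']

namespace SemistandardYoungTableau

variable {γ : YoungDiagram} (T : SemistandardYoungTableau γ)

theorem entry_zero_add_le_entry {i j : ℕ} (h : (i, j) ∈ γ) : T 0 j + i ≤ T i j := by
  induction i with
  | zero => rfl
  | succ i ih =>
    have hup : (i, j) ∈ γ := γ.up_left_mem i.le_succ le_rfl h
    have hlt : T i j < T (i + 1) j := T.col_strict i.lt_succ_self h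
    have := ih hup
    omega

theorem row_lt_entry (hT : ∀ c ∈ γ.cells, 1 ≤ T c.1 c.2) {c : ℕ × ℕ} (hc : c ∈ γ.cells) :
    c.1 < T c.1 c.2 := by
  have hzero : 1 ≤ T 0 c.2 := hT (0, c.2) (by simpa using γ.up_left_mem c.1.zero_le le_rfl hc)
  have := T.entry_zero_add_le_entry hc
  omega

/-- `⟨λ^{(k)} - μ^{(k)}, ρ^{(k)}⟩`, with rows and entries shifted to start at `0`. -/
def rhoPairing (k : ℕ) : ℤ :=
  ∑ a ∈ range k, ((k : ℤ) - a) *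
    ((#{c ∈ γ.cells | c.1 = a ∧ T c.1 c.2 ≤ k} : ℤ) - (#{c ∈ γ.cells | T c.1 c.2 = a + 1} : ℤ))

theorem rhoPairing_eq_sum (hT : ∀ c ∈ γ.cells, 1 ≤ T c.1 c.2) (k : ℕ) :
    T.rhoPairing k = ∑ c ∈ γ.cells with T c.1 c.2 ≤ k, ((T c.1 c.2 : ℤ) - (c.1 + 1)) := by
  set s := γ.cells.filter (fun c => T c.1 c.2 ≤ k)
  have hrow : ∀ a, #{c ∈ γ.cells | c.1 = a ∧ T c.1 c.2 ≤ k} = #{c ∈ s | c.1 = a} := by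
    intro a
    rw [filter_filter]
    simp only [and_comm]
  have hentry : ∀ a ∈ range k,
      #{c ∈ γ.cells | T c.1 c.2 = a + 1} = #{c ∈ s | T c.1 c.2 - 1 = a} := by
    intro a ha
    rw [filter_filter]
    congr 1
    refine filter_congr fun c hc => ?_
    have := hT c hc
    have := mem_range.1 ha
    omega
  have hrow_lt : ∀ c ∈ s, c.1 ∈ range k := fun c hc => by
    have := (mem_filter.1 hc).2
    have := T.row_lt_entry hT (mem_filter.1 hc).1
    exact mem_range.2 (by omega)
  have hentry_lt : ∀ c ∈ s, T c.1 c.2 - 1 ∈ range k := fun c hc => by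
    have := (mem_filter.1 hc).2
    have := hT c (mem_filter.1 hc).1
    exact mem_range.2 (by omega)
  calc T.rhoPairing k
      = ∑ a ∈ range k, ((k : ℤ) - a) *
          ((#{c ∈ s | c.1 = a} : ℤ) - (#{c ∈ s | T c.1 c.2 - 1 = a} : ℤ)) :=
        sum_congr rfl fun a ha => by rw [hrow a, hentry a ha]
    _ = ∑ c ∈ s, (((k : ℤ) - c.1) - ((k : ℤ) - (T c.1 c.2 - 1 : ℕ))) := by
        simp only [mul_sub, sum_sub_distrib, sum_mul_card_filter_eq_sum_comp hrow_lt,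
          sum_mul_card_filter_eq_sum_comp hentry_lt]
    _ = _ := sum_congr rfl fun c hc => by
        have := hT c (mem_filter.1 hc).1
        omega

end SemistandardYoungTableau

/-- For a semistandard Young tableau `τ` of shape `λ` and weight `μ`
in the alphabet `{1,…,m}` (Mathlib rows are `0`-based, so the `1`-based row of a
cell `c` is `c.1 + 1`; the `a`-th part of `λ^{(i)}` is the number of cells in row
`a` with entry `≤ i`, and `μ_i` is the number of cells with entry `i`):
`⟨λ - μ, ρ^{(m)}⟩ - ⟨λ^{(m-1)} - μ^{(m-1)}, ρ^{(m-1)}⟩ = ∑_{k=1}^{μ_m} (m - r_{m,k})`,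
where the right-hand sum over occurrences of the entry `m` is written as the sum
over all cells containing `m` of `m` minus the (`1`-based) row of the cell. -/
theorem gt_pattern_weight_difference (γ : YoungDiagram)
    (T : SemistandardYoungTableau γ) (m : ℕ) (hm : 1 ≤ m)
    (hT : ∀ c ∈ γ.cells, 1 ≤ T c.1 c.2 ∧ T c.1 c.2 ≤ m) :
    (∑ a ∈ Finset.range m, ((m : ℤ) - a) *
        (((γ.cells.filter (fun c => c.1 = a ∧ T c.1 c.2 ≤ m)).card : ℤ) -
          ((γ.cells.filter (fun c => T c.1 c.2 = a + 1)).card : ℤ))) -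
      (∑ a ∈ Finset.range (m - 1), ((m : ℤ) - 1 - a) *
        (((γ.cells.filter (fun c => c.1 = a ∧ T c.1 c.2 ≤ m - 1)).card : ℤ) -
          ((γ.cells.filter (fun c => T c.1 c.2 = a + 1)).card : ℤ))) =
    ∑ c ∈ γ.cells.filter (fun c => T c.1 c.2 = m), ((m : ℤ) - (c.1 + 1)) := by
  have hpos : ∀ c ∈ γ.cells, 1 ≤ T c.1 c.2 := fun c hc => (hT c hc).1
  have hcast : ((m - 1 : ℕ) : ℤ) = m - 1 := by omega
  have hm₁ := T.rhoPairing_eq_sum hpos m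
  have hm₀ := T.rhoPairing_eq_sum hpos (m - 1)
  rw [SemistandardYoungTableau.rhoPairing] at hm₁ hm₀
  rw [hcast] at hm₀
  rw [hm₁, hm₀]
  simp only [sum_filter, ← sum_sub_distrib]
  refine sum_congr rfl fun c _ => ?_
  split_ifs <;> omega
end
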